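/- Let A = K[x]/(x^d) and let s be a linearly recurrent sequence in A^n. For each i ∈ {0, ..., d−1}, let P_i ∈ A[y] be a polynomial canceling s whose leading coefficient is x^i and which is of minimal degree among all canceling polynomials with leading coefficient x^i. Then Ann(s) is generated as an ideal of A[y] by {P_0, P_1, ..., P_{d−1}}. -/

import Mathlib

set_option synthInstance.maxHeartbeats 1000000
set_option maxHeartbeats 1000000

open Polynomial

/-- The ring `A = K[x]/(x^d)` of truncated polynomials. -/
abbrev TP (K : Type) [Field K] (d : ℕ) :=
  Polynomial K ⧸ Ideal.span {(X : Polynomial K) ^ d}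

/-- A polynomial `P = Σ p_i y^i ∈ R[y]` cancels the sequence `s` of vectors in `R^n`
if `Σ_i p_i s_{k+i} = 0` for all `k ≥ 0`. -/
def Cancels {R : Type*} [CommRing R] {n : ℕ} (P : Polynomial R)
    (s : ℕ → Fin n → R) : Prop :=
  ∀ k : ℕ, ∑ i ∈ Finset.range (P.natDegree + 1), P.coeff i • s (k + i) = 0

section Aux

variable {K : Type} [Field K] {d : ℕ}

/-- Every nonzero element of `TP K d` is `x^t * u` for a unit `u` and `t < d`. -/
lemma tp_exists_unit {a : TP K d} (ha : a ≠ 0) :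
    ∃ t, t < d ∧ ∃ u : (TP K d)ˣ,
      a = (Ideal.Quotient.mk (Ideal.span {(X : Polynomial K) ^ d}) X) ^ t * u := by
  set mk := Ideal.Quotient.mk (Ideal.span {(X : Polynomial K) ^ d}) with hmk
  obtain ⟨p, rfl⟩ := Ideal.Quotient.mk_surjective a
  have hp : p ≠ 0 := by rintro rfl; simp at ha
  set t := p.natTrailingDegree with ht
  have hdvd : (X : Polynomial K) ^ t ∣ p :=
    Polynomial.X_pow_dvd_iff.mpr fun e he => coeff_eq_zero_of_lt_natTrailingDegree he
  obtain ⟨q, hq⟩ := hdvd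
  have hc : q.coeff 0 ≠ 0 := by
    have h1 : p.coeff t = q.coeff 0 := by
      rw [hq]
      simpa using Polynomial.coeff_X_pow_mul q t 0
    rw [← h1]
    exact fun h => hp (Polynomial.trailingCoeff_eq_zero.mp h)
  have htd : t < d := by
    by_contra h
    push_neg at h
    apply ha
    rw [Ideal.Quotient.eq_zero_iff_mem, Ideal.mem_span_singleton, hq]
    exact Dvd.dvd.mul_right (pow_dvd_pow X h) q
  refine ⟨t, htd, ?_⟩
  -- mk q is a unit
  have hnil : IsNilpotent (mk (q - C (q.coeff 0))) := by
    refine ⟨d, ?_⟩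
    rw [← map_pow, Ideal.Quotient.eq_zero_iff_mem, Ideal.mem_span_singleton]
    have : (X : Polynomial K) ∣ (q - C (q.coeff 0)) := by
      rw [Polynomial.X_dvd_iff]; simp
    exact pow_dvd_pow_of_dvd this d
  have hcu : IsUnit (mk (C (q.coeff 0))) := by
    apply IsUnit.of_mul_eq_one (mk (C (q.coeff 0)⁻¹))
    rw [← map_mul, ← C_mul, mul_inv_cancel₀ hc, C_1, map_one]
  have huq : IsUnit (mk q) := by
    have := IsNilpotent.isUnit_add_right_of_commute hnil hcu (Commute.all _ _)
    rwa [← map_add, sub_add_cancel] at this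
  obtain ⟨u, hu⟩ := huq
  exact ⟨u, by rw [hq, map_mul, map_pow, hu]⟩

variable {n : ℕ} {s : ℕ → Fin n → TP K d}

lemma sum_coeff_ext {Q : Polynomial (TP K d)} {N : ℕ} (hN : Q.natDegree ≤ N) (k : ℕ) :
    ∑ i ∈ Finset.range (N + 1), Q.coeff i • s (k + i)
      = ∑ i ∈ Finset.range (Q.natDegree + 1), Q.coeff i • s (k + i) := by
  refine (Finset.sum_subset (Finset.range_subset_range.mpr (by omega)) fun x hx hxn => ?_).symm
  have hx' : Q.natDegree < x := by
    simp only [Finset.mem_range] at hx hxn; omega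
  rw [Polynomial.coeff_eq_zero_of_natDegree_lt hx', zero_smul]

lemma cancels_apply {Q : Polynomial (TP K d)} (hQ : Cancels Q s) {N : ℕ}
    (hN : Q.natDegree ≤ N) (k : ℕ) :
    ∑ i ∈ Finset.range (N + 1), Q.coeff i • s (k + i) = 0 := by
  rw [sum_coeff_ext hN]; exact hQ k

lemma cancels_of_forall {Q : Polynomial (TP K d)} {N : ℕ} (hN : Q.natDegree ≤ N)
    (h : ∀ k, ∑ i ∈ Finset.range (N + 1), Q.coeff i • s (k + i) = 0) : Cancels Q s :=
  fun k => by rw [← sum_coeff_ext hN]; exact h k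

lemma cancels_add {Q R : Polynomial (TP K d)} (hQ : Cancels Q s) (hR : Cancels R s) :
    Cancels (Q + R) s := by
  set N := max Q.natDegree R.natDegree with hNdef
  refine cancels_of_forall (le_trans (Polynomial.natDegree_add_le Q R) le_rfl) fun k => ?_
  have h1 : ∑ i ∈ Finset.range (N + 1), (Q + R).coeff i • s (k + i)
      = (∑ i ∈ Finset.range (N + 1), Q.coeff i • s (k + i))
        + ∑ i ∈ Finset.range (N + 1), R.coeff i • s (k + i) := by
    rw [← Finset.sum_add_distrib]
    refine Finset.sum_congr rfl fun i _ => ?_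
    rw [Polynomial.coeff_add, add_smul]
  rw [h1, cancels_apply hQ (le_max_left _ _), cancels_apply hR (le_max_right _ _), add_zero]

lemma cancels_C_mul (a : TP K d) {Q : Polynomial (TP K d)} (hQ : Cancels Q s) :
    Cancels (C a * Q) s := by
  refine cancels_of_forall (natDegree_C_mul_le a Q) fun k => ?_
  have h1 : ∑ i ∈ Finset.range (Q.natDegree + 1), (C a * Q).coeff i • s (k + i)
      = a • ∑ i ∈ Finset.range (Q.natDegree + 1), Q.coeff i • s (k + i) := by
    rw [Finset.smul_sum]
    refine Finset.sum_congr rfl fun i _ => ?_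
    rw [Polynomial.coeff_C_mul, ← smul_smul]
  rw [h1, hQ k, smul_zero]

lemma cancels_X_mul {Q : Polynomial (TP K d)} (hQ : Cancels Q s) :
    Cancels (X * Q) s := by
  have hdb : (X * Q).natDegree ≤ Q.natDegree + 1 := by
    have h1 : (X * Q).natDegree ≤ (X : Polynomial (TP K d)).natDegree + Q.natDegree :=
      Polynomial.natDegree_mul_le
    have h2 : (X : Polynomial (TP K d)).natDegree ≤ 1 := Polynomial.natDegree_X_le
    omega
  refine cancels_of_forall hdb fun k => ?_
  rw [Finset.sum_range_succ']
  have h0 : (X * Q).coeff 0 • s (k + 0) = 0 := by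
    rw [Polynomial.mul_coeff_zero, Polynomial.coeff_X_zero, zero_mul, zero_smul]
  rw [h0, add_zero]
  have h1 : ∀ i, (X * Q).coeff (i + 1) • s (k + (i + 1)) = Q.coeff i • s ((k + 1) + i) := by
    intro i
    rw [Polynomial.coeff_X_mul, show k + (i + 1) = (k + 1) + i by omega]
  rw [Finset.sum_congr rfl fun i _ => h1 i]
  exact hQ (k + 1)

lemma cancels_X_pow_mul (m : ℕ) {Q : Polynomial (TP K d)} (hQ : Cancels Q s) :
    Cancels (X ^ m * Q) s := by
  induction m with
  | zero => simpa using hQ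
  | succ m ih =>
      have : (X : Polynomial (TP K d)) ^ (m + 1) * Q = X * (X ^ m * Q) := by ring
      rw [this]
      exact cancels_X_mul ih

lemma cancels_mul (R : Polynomial (TP K d)) {Q : Polynomial (TP K d)} (hQ : Cancels Q s) :
    Cancels (R * Q) s := by
  induction R using Polynomial.induction_on' with
  | add p q hp hq => rw [add_mul]; exact cancels_add hp hq
  | monomial m a =>
      rw [← Polynomial.C_mul_X_pow_eq_monomial, mul_assoc]
      exact cancels_C_mul a (cancels_X_pow_mul m hQ)

lemma cancels_zero : Cancels (0 : Polynomial (TP K d)) s := by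
  intro k; simp

lemma cancels_sub {Q R : Polynomial (TP K d)} (hQ : Cancels Q s) (hR : Cancels R s) :
    Cancels (Q - R) s := by
  have : Q - R = Q + C (-1) * R := by rw [map_neg, map_one, neg_one_mul, sub_eq_add_neg]
  rw [this]
  exact cancels_add hQ (cancels_C_mul _ hR)

lemma natDegree_unit_C_mul (u : (TP K d)ˣ) (Q : Polynomial (TP K d)) :
    (C (u : TP K d) * Q).natDegree = Q.natDegree := by
  refine le_antisymm (natDegree_C_mul_le _ _) ?_
  have : Q = C ((u⁻¹ : (TP K d)ˣ) : TP K d) * (C (u : TP K d) * Q) := by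
    rw [← mul_assoc, ← C_mul, Units.inv_mul, C_1, one_mul]
  conv_lhs => rw [this]
  exact natDegree_C_mul_le _ _

end Aux

/-- If for each `i < d`, `P i` is a canceling polynomial of the linearly recurrent
sequence `s` with leading coefficient `x^i`, of minimal degree among all canceling
polynomials with leading coefficient `x^i`, then `Ann(s) = ⟨P_0, ..., P_{d-1}⟩`. -/
theorem stmt13 (K : Type) [Field K] (d : ℕ) (hd : 0 < d) (n : ℕ)
    (s : ℕ → Fin n → TP K d)
    (hrec : ∃ P : Polynomial (TP K d), P.Monic ∧ Cancels P s)
    (P : Fin d → Polynomial (TP K d))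
    (hP : ∀ i : Fin d, Cancels (P i) s ∧
      (P i).leadingCoeff = (Ideal.Quotient.mk (Ideal.span {(X : Polynomial K) ^ d}) X) ^ (i : ℕ) ∧
      (∀ Q : Polynomial (TP K d), Cancels Q s →
        Q.leadingCoeff = (Ideal.Quotient.mk (Ideal.span {(X : Polynomial K) ^ d}) X) ^ (i : ℕ) →
        (P i).natDegree ≤ Q.natDegree)) :
    (Ideal.span (Set.range P) : Set (Polynomial (TP K d)))
      = {Q : Polynomial (TP K d) | Cancels Q s} := by
  haveI : Nontrivial (TP K d) := by
    refine Ideal.Quotient.nontrivial_iff.mpr ?_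
    rw [Ne, Ideal.span_singleton_eq_top]
    exact Polynomial.not_isUnit_of_natDegree_pos _ (by simpa using hd)
  set x : TP K d := Ideal.Quotient.mk (Ideal.span {(X : Polynomial K) ^ d}) X with hx
  -- x^t ≠ 0 for t < d
  have hxpow : ∀ t, t < d → x ^ t ≠ 0 := by
    intro t htd h
    rw [hx, ← map_pow, Ideal.Quotient.eq_zero_iff_mem, Ideal.mem_span_singleton,
      Polynomial.X_pow_dvd_iff] at h
    have := h t htd
    simp at this
  -- reverse inclusion by strong induction on degree
  have key : ∀ m : ℕ, ∀ Q : Polynomial (TP K d), Q.natDegree ≤ m → Cancels Q s →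
      Q ∈ Ideal.span (Set.range P) := by
    intro m
    induction m using Nat.strong_induction_on with
    | _ m ih =>
      intro Q hdeg hQ
      by_cases hQ0 : Q = 0
      · rw [hQ0]; exact Ideal.zero_mem _
      · obtain ⟨t, htd, u, hu⟩ := tp_exists_unit (leadingCoeff_ne_zero.mpr hQ0)
        set i : Fin d := ⟨t, htd⟩ with hi
        obtain ⟨hPc, hPl, hPmin⟩ := hP i
        have hPl' : (P i).leadingCoeff = x ^ t := hPl
        set Q' : Polynomial (TP K d) := C ((u⁻¹ : (TP K d)ˣ) : TP K d) * Q with hQ'def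
        have hQ'c : Cancels Q' s := cancels_C_mul _ hQ
        have hQ'deg : Q'.natDegree = Q.natDegree := natDegree_unit_C_mul u⁻¹ Q
        have hQ'0 : Q' ≠ 0 := by
          intro h
          apply hQ0
          have : C (u : TP K d) * Q' = Q := by
            rw [hQ'def, ← mul_assoc, ← C_mul, Units.mul_inv, C_1, one_mul]
          rw [← this, h, mul_zero]
        have hQ'lead : Q'.leadingCoeff = x ^ t := by
          rw [Polynomial.leadingCoeff, hQ'deg, hQ'def, Polynomial.coeff_C_mul,
            ← Polynomial.leadingCoeff, hu]
          rw [mul_comm (x ^ t) _, ← mul_assoc, Units.inv_mul, one_mul]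
        have hmin : (P i).natDegree ≤ Q.natDegree := by
          rw [← hQ'deg]; exact hPmin Q' hQ'c hQ'lead
        have hPi0 : P i ≠ 0 := leadingCoeff_ne_zero.mp (by rw [hPl']; exact hxpow t htd)
        set R : Polynomial (TP K d) := P i * X ^ (Q.natDegree - (P i).natDegree) with hR
        have hRlead : R.leadingCoeff = x ^ t := by
          rw [hR, Polynomial.leadingCoeff_mul_X_pow, hPl']
        have hR0 : R ≠ 0 := leadingCoeff_ne_zero.mp (by rw [hRlead]; exact hxpow t htd)
        have hRdeg : R.natDegree = Q.natDegree := by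
          rw [hR, Polynomial.natDegree_mul' (by
            rw [Polynomial.leadingCoeff_X_pow, mul_one, hPl']; exact hxpow t htd)]
          rw [Polynomial.natDegree_X_pow]
          omega
        have hRc : Cancels R s := by
          rw [hR, mul_comm (P i)]; exact cancels_X_pow_mul _ hPc
        have hRmem : R ∈ Ideal.span (Set.range P) := by
          rw [hR, mul_comm (P i)]; exact Ideal.mul_mem_left _ _ (Ideal.subset_span ⟨i, rfl⟩)
        have hQ'mem : Q' ∈ Ideal.span (Set.range P) := by
          by_cases h0 : Q' - R = 0
          · rw [sub_eq_zero] at h0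
            rw [h0]; exact hRmem
          · have hdeglt : (Q' - R).degree < Q'.degree := by
              refine Polynomial.degree_sub_lt ?_ hQ'0 (by rw [hQ'lead, hRlead])
              rw [Polynomial.degree_eq_natDegree hQ'0, Polynomial.degree_eq_natDegree hR0,
                hQ'deg, hRdeg]
            have hnd : (Q' - R).natDegree < Q.natDegree := by
              rw [← hQ'deg]
              exact Polynomial.natDegree_lt_natDegree h0 hdeglt
            have hsub : Q' - R ∈ Ideal.span (Set.range P) :=
              ih (Q' - R).natDegree (by omega) _ le_rfl (cancels_sub hQ'c hRc)
            have hmem' : Q' - R + R ∈ Ideal.span (Set.range P) :=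
              Ideal.add_mem _ hsub hRmem
            simpa using hmem'
        have hQeq : Q = C (u : TP K d) * Q' := by
          rw [hQ'def, ← mul_assoc, ← C_mul, Units.mul_inv, C_1, one_mul]
        have hfin : C (u : TP K d) * Q' ∈ Ideal.span (Set.range P) :=
          Ideal.mul_mem_left _ _ hQ'mem
        rwa [← hQeq] at hfin
  ext Q
  simp only [SetLike.mem_coe, Set.mem_setOf_eq]
  constructor
  · intro hmem
    refine Submodule.span_induction (p := fun Q _ => Cancels Q s)
      (fun Q hQ => ?_) cancels_zero (fun a b _ _ ha hb => cancels_add ha hb)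
      (fun a b _ hb => by
        show Cancels (a • b) s
        rw [smul_eq_mul]
        exact cancels_mul a hb) hmem
    obtain ⟨i, rfl⟩ := hQ
    exact (hP i).1
  · intro hQ
    exact key Q.natDegree Q le_rfl hQ
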